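/- arXiv:1301.6389 — 4 statements merged into one kernel-verified Lean document; each statement's English description precedes it below -/
import Mathlib

section
/- Integration by parts implies rapid decay of the characteristic function: Let (Ω, 𝒜, P) be a probability space and X : Ω → ℝ^d a random vector. Assume that for every n ≥ 1 and every finite sequence of indices i₁, …, i_n ∈ {1, …, d} there exists an integrable random variable Z ∈ L¹(P) such that E[(∂_{i_n} ⋯ ∂_{i₁} f)(X)] = E[f(X) · Z] for every smooth compactly supported function f : ℝ^d → ℝ. Then for every m ∈ ℕ there is a constant C_m such that |E[exp(i⟨ξ, X⟩)]| ≤ C_m (1 + ‖ξ‖)^{-m} for all ξ ∈ ℝ^d. -/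
/-! Let `φ` be the characteristic function of `X`, and fix a coordinate `i`, an order `m ≥ 1`
and the weight `Z` of `∂_i^m`. Multiplying a smooth function with bounded derivatives by the
cutoffs `χ(x / (n + 1))` and passing to the limit by dominated convergence extends the identity
`E[∂_i^m f(X)] = E[f(X) Z]` to such functions, and, testing against continuous linear
functionals, to vector-valued ones. For `f = exp(i⟨ξ, ·⟩)` it reads
`(i ξ_i)^m φ(ξ) = E[exp(i⟨ξ, X⟩) Z]`, so `|ξ_i|^m |φ(ξ)| ≤ E|Z|`. Since
`‖ξ‖ ≤ √d max_i |ξ_i|` and `|φ| ≤ 1`, this bounds `(1 + ‖ξ‖)^m |φ(ξ)|`. -/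

open MeasureTheory

/-- Iterated partial derivatives along a list of coordinate indices:
`pderivList [i₁, …, iₙ] f = ∂_{iₙ} ⋯ ∂_{i₁} f` (the head of the list acts first,
i.e. innermost). -/
noncomputable def pderivList {d : ℕ} :
    List (Fin d) → (EuclideanSpace ℝ (Fin d) → ℝ) → (EuclideanSpace ℝ (Fin d) → ℝ)
  | [], f => f
  | i :: is, f => pderivList is (fun x => fderiv ℝ f x (EuclideanSpace.single i 1))

open Filter Topology Complex
open scoped RealInnerProductSpace

section Derivatives

variable {E F G : Type*} [NormedAddCommGroup E] [NormedSpace ℝ E]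
  [NormedAddCommGroup F] [NormedSpace ℝ F] [NormedAddCommGroup G] [NormedSpace ℝ G]

noncomputable def dirDeriv (v : E) (f : E → F) : E → F :=
  fun x => fderiv ℝ f x v

def HasBoundedIteratedFDeriv (f : E → F) : Prop :=
  ∀ k : ℕ, ∃ C, ∀ x, ‖iteratedFDeriv ℝ k f x‖ ≤ C

theorem norm_iteratedFDeriv_comp_clm_le (L : E →L[ℝ] G) {f : G → F}
    (hf : ContDiff ℝ (⊤ : ℕ∞) f) (k : ℕ) (x : E) :
    ‖iteratedFDeriv ℝ k (f ∘ L) x‖ ≤ ‖iteratedFDeriv ℝ k f (L x)‖ * ‖L‖ ^ k := by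
  rw [L.iteratedFDeriv_comp_right hf x (by exact_mod_cast le_top)]
  simpa using (iteratedFDeriv ℝ k f (L x)).norm_compContinuousLinearMap_le fun _ => L

theorem exists_bound_iteratedFDeriv_mul {A ι : Type*} [NormedRing A] [NormedAlgebra ℝ A]
    {g : E → A} {χ : ι → E → A} (hg : ContDiff ℝ (⊤ : ℕ∞) g) (hgb : HasBoundedIteratedFDeriv g)
    (hχ : ∀ n, ContDiff ℝ (⊤ : ℕ∞) (χ n))
    (hχb : ∀ k, ∃ C, ∀ n x, ‖iteratedFDeriv ℝ k (χ n) x‖ ≤ C) (k : ℕ) :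
    ∃ C, ∀ n x, ‖iteratedFDeriv ℝ k (fun y => g y * χ n y) x‖ ≤ C := by
  choose Cg hCg using hgb
  choose Cχ hCχ using hχb
  refine ⟨∑ i ∈ Finset.range (k + 1), k.choose i * Cg i * Cχ (k - i), fun n x => ?_⟩
  refine (norm_iteratedFDeriv_mul_le hg (hχ n) x (by exact_mod_cast le_top)).trans ?_
  gcongr with i
  · exact mul_nonneg (Nat.cast_nonneg _) ((norm_nonneg _).trans (hCg i x))
  · exact hCg i x
  · exact hCχ _ n x

variable {f g : E → F} {v : E}

theorem contDiff_dirDeriv (hf : ContDiff ℝ (⊤ : ℕ∞) f) (v : E) :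
    ContDiff ℝ (⊤ : ℕ∞) (dirDeriv v f) :=
  (hf.fderiv_right (by simp)).clm_apply contDiff_const

theorem contDiff_dirDeriv_iterate (hf : ContDiff ℝ (⊤ : ℕ∞) f) (v : E) (m : ℕ) :
    ContDiff ℝ (⊤ : ℕ∞) ((dirDeriv v)^[m] f) :=
  Function.Iterate.rec _ hf (fun _ hg => contDiff_dirDeriv hg v) m

theorem dirDeriv_iterate_apply (hf : ContDiff ℝ (⊤ : ℕ∞) f) (m : ℕ) (x : E) :
    (dirDeriv v)^[m] f x = iteratedFDeriv ℝ m f x (fun _ => v) := by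
  induction m generalizing x with
  | zero => simp
  | succ m ih =>
    rw [Function.iterate_succ_apply', iteratedFDeriv_succ_apply_left, dirDeriv,
      show (dirDeriv v)^[m] f = fun y => iteratedFDeriv ℝ m f y (fun _ => v) from funext ih,
      fderiv_continuousMultilinear_apply_const_apply]
    · rfl
    · exact (hf.differentiable_iteratedFDeriv
        (by exact_mod_cast WithTop.coe_lt_top _)).differentiableAt

theorem norm_dirDeriv_iterate_le (hf : ContDiff ℝ (⊤ : ℕ∞) f) (m : ℕ) (x : E) :
    ‖(dirDeriv v)^[m] f x‖ ≤ ‖iteratedFDeriv ℝ m f x‖ * ‖v‖ ^ m := by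
  rw [dirDeriv_iterate_apply hf]
  simpa using (iteratedFDeriv ℝ m f x).le_opNorm fun _ => v

theorem Filter.EventuallyEq.dirDeriv_iterate {x : E} (h : f =ᶠ[𝓝 x] g) (m : ℕ) :
    (dirDeriv v)^[m] f =ᶠ[𝓝 x] (dirDeriv v)^[m] g := by
  induction m generalizing f g with
  | zero => exact h
  | succ m ih => exact ih ((h.fderiv (𝕜 := ℝ)).mono fun y hy => by simp only [dirDeriv, hy])

theorem dirDeriv_iterate_clm_comp (L : F →L[ℝ] G) (hf : ContDiff ℝ (⊤ : ℕ∞) f) (m : ℕ) :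
    (dirDeriv v)^[m] (L ∘ f) = L ∘ (dirDeriv v)^[m] f := by
  induction m generalizing f with
  | zero => rfl
  | succ m ih =>
    have hstep : dirDeriv v (L ∘ f) = L ∘ dirDeriv v f := by
      ext x
      simp [dirDeriv, fderiv_comp x L.differentiableAt (hf.differentiable (by simp) x)]
    rw [Function.iterate_succ_apply, hstep, ih (contDiff_dirDeriv hf v),
      Function.iterate_succ_apply]

end Derivatives

theorem pderivList_replicate {d : ℕ} (m : ℕ) (i : Fin d) (f : EuclideanSpace ℝ (Fin d) → ℝ) :
    pderivList (List.replicate m i) f = (dirDeriv (EuclideanSpace.single i 1))^[m] f := by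
  induction m generalizing f with
  | zero => rfl
  | succ m ih => exact ih _

theorem contDiff_cexp_I_mul_ofReal : ContDiff ℝ (⊤ : ℕ∞) fun t : ℝ => cexp (I * t) :=
  contDiff_exp.comp (contDiff_const.mul ofRealCLM.contDiff)

theorem iteratedDeriv_cexp_I_mul_ofReal (k : ℕ) :
    iteratedDeriv k (fun t : ℝ => cexp (I * t)) = fun t : ℝ => I ^ k * cexp (I * t) := by
  induction k with
  | zero => simp
  | succ k ih =>
    ext t
    rw [iteratedDeriv_succ, ih]
    have := (((hasDerivAt_id' t).ofReal_comp).const_mul I).cexp.const_mul (I ^ k)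
    rw [this.deriv]
    simp only [ofReal_one, mul_one, pow_succ]
    ring

section Exponential

variable {E : Type*} [NormedAddCommGroup E] [InnerProductSpace ℝ E] (ξ : E)

theorem contDiff_cexp_I_mul_inner : ContDiff ℝ (⊤ : ℕ∞) fun x : E => cexp (I * ⟪ξ, x⟫) :=
  contDiff_cexp_I_mul_ofReal.comp (innerSL ℝ ξ).contDiff

theorem hasBoundedIteratedFDeriv_cexp_I_mul_inner :
    HasBoundedIteratedFDeriv fun x : E => cexp (I * ⟪ξ, x⟫) := fun k => ⟨‖ξ‖ ^ k, fun x =>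
  calc ‖iteratedFDeriv ℝ k ((fun t : ℝ => cexp (I * t)) ∘ innerSL ℝ ξ) x‖
      ≤ ‖iteratedFDeriv ℝ k (fun t : ℝ => cexp (I * t)) (innerSL ℝ ξ x)‖ * ‖innerSL ℝ ξ‖ ^ k :=
        norm_iteratedFDeriv_comp_clm_le _ contDiff_cexp_I_mul_ofReal k x
    _ = ‖ξ‖ ^ k := by
        rw [norm_iteratedFDeriv_eq_norm_iteratedDeriv, iteratedDeriv_cexp_I_mul_ofReal]
        simp [norm_exp_I_mul_ofReal]⟩

theorem dirDeriv_const_mul_cexp_I_mul_inner (v : E) (c : ℂ) :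
    dirDeriv v (fun x : E => c * cexp (I * ⟪ξ, x⟫)) =
      fun x => c * (I * ⟪ξ, v⟫) * cexp (I * ⟪ξ, x⟫) := by
  ext x
  have hg := ((hasDerivAt_id' (innerSL ℝ ξ x)).ofReal_comp.const_mul I).cexp.const_mul c
  have hfderiv : HasFDerivAt (fun x : E => c * cexp (I * ⟪ξ, x⟫)) _ x :=
    hg.hasFDerivAt.comp x (innerSL ℝ ξ).hasFDerivAt
  rw [dirDeriv, hfderiv.fderiv]
  simp only [coe_innerSL_apply, ofReal_one, mul_one, ContinuousLinearMap.comp_apply,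
    ContinuousLinearMap.toSpanSingleton_apply, real_smul]
  ring

theorem dirDeriv_iterate_cexp_I_mul_inner (v : E) (m : ℕ) :
    (dirDeriv v)^[m] (fun x : E => cexp (I * ⟪ξ, x⟫)) =
      fun x => (I * ⟪ξ, v⟫) ^ m * cexp (I * ⟪ξ, x⟫) := by
  induction m with
  | zero => simp
  | succ m ih =>
    rw [Function.iterate_succ_apply', ih, dirDeriv_const_mul_cexp_I_mul_inner]
    ext x
    ring

end Exponential

theorem exists_cutoff_seq {E : Type*} [NormedAddCommGroup E] [NormedSpace ℝ E]
    [FiniteDimensional ℝ E] :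
    ∃ χ : ℕ → E → ℝ, (∀ n, ContDiff ℝ (⊤ : ℕ∞) (χ n)) ∧ (∀ n, HasCompactSupport (χ n)) ∧
      (∀ x, ∀ᶠ n in atTop, χ n =ᶠ[𝓝 x] 1) ∧ ∀ k, ∃ C, ∀ n x, ‖iteratedFDeriv ℝ k (χ n) x‖ ≤ C := by
  let b : ContDiffBump (0 : E) := ⟨1, 2, one_pos, one_lt_two⟩
  let L : ℕ → E →L[ℝ] E := fun n => (n + 1 : ℝ)⁻¹ • ContinuousLinearMap.id ℝ E
  have hL (n : ℕ) : ‖L n‖ ≤ 1 := by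
    refine (ContinuousLinearMap.opNorm_smul_le _ _).trans
      (mul_le_one₀ ?_ (norm_nonneg _) ContinuousLinearMap.norm_id_le)
    rw [norm_inv, Real.norm_of_nonneg (by positivity)]
    exact inv_le_one_of_one_le₀ (by simp)
  refine ⟨fun n => b ∘ L n, fun n => b.contDiff.comp (L n).contDiff, fun n => ?_, fun x => ?_,
    fun k => ?_⟩
  · exact b.hasCompactSupport.comp_homeomorph (Homeomorph.smulOfNeZero _ (by positivity))
  · filter_upwards [(tendsto_natCast_atTop_atTop (R := ℝ)).eventually_gt_atTop ‖x‖] with n hn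
    filter_upwards [Metric.isOpen_ball.mem_nhds (mem_ball_zero_iff.2 hn)] with y hy
    apply b.one_of_mem_closedBall
    rw [mem_closedBall_zero_iff]
    change ‖(n + 1 : ℝ)⁻¹ • y‖ ≤ 1
    rw [norm_smul, norm_inv, Real.norm_of_nonneg (by positivity), inv_mul_le_one₀ (by positivity)]
    linarith [mem_ball_zero_iff.1 hy]
  · obtain ⟨C, hC⟩ := (b.hasCompactSupport.iteratedFDeriv k).exists_bound_of_continuous
      (b.contDiff.continuous_iteratedFDeriv (by exact_mod_cast le_top))
    refine ⟨C, fun n x => (norm_iteratedFDeriv_comp_clm_le (L n) b.contDiff k x).trans ?_⟩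
    exact (mul_le_of_le_one_right (norm_nonneg _) (pow_le_one₀ (norm_nonneg _) (hL n))).trans
      (hC _)

section IntegrationByParts

variable {Ω E : Type*} [MeasurableSpace Ω] [NormedAddCommGroup E] [NormedSpace ℝ E]

def IntegratesByParts (P : Measure Ω) (X : Ω → E) (v : E) (m : ℕ) (Z : Ω → ℝ) : Prop :=
  ∀ f : E → ℝ, ContDiff ℝ (⊤ : ℕ∞) f → HasCompactSupport f →
    ∫ ω, (dirDeriv v)^[m] f (X ω) ∂P = ∫ ω, f (X ω) * Z ω ∂P

variable [MeasurableSpace E] [BorelSpace E] [FiniteDimensional ℝ E] {P : Measure Ω}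
  [IsFiniteMeasure P] {X : Ω → E} {v : E} {m : ℕ} {Z : Ω → ℝ}

theorem IntegratesByParts.integral_eq_of_hasBoundedIteratedFDeriv
    (hIBP : IntegratesByParts P X v m Z) (hX : AEMeasurable X P) (hZ : Integrable Z P)
    {g : E → ℝ} (hg : ContDiff ℝ (⊤ : ℕ∞) g) (hgb : HasBoundedIteratedFDeriv g) :
    ∫ ω, (dirDeriv v)^[m] g (X ω) ∂P = ∫ ω, g (X ω) * Z ω ∂P := by
  obtain ⟨χ, hχ, hχc, hχ₁, hχb⟩ := exists_cutoff_seq (E := E)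
  set gχ : ℕ → E → ℝ := fun n y => g y * χ n y
  have hgχ (n : ℕ) : ContDiff ℝ (⊤ : ℕ∞) (gχ n) := hg.mul (hχ n)
  have hloc (x : E) : ∀ᶠ n in atTop, gχ n =ᶠ[𝓝 x] g :=
    (hχ₁ x).mono fun n hn => hn.mono fun y hy => by simp [gχ, hy]
  obtain ⟨B₀, hB₀⟩ := exists_bound_iteratedFDeriv_mul hg hgb hχ hχb 0
  obtain ⟨Bₘ, hBₘ⟩ := exists_bound_iteratedFDeriv_mul hg hgb hχ hχb m
  have hmeas {φ : E → ℝ} (hφ : Continuous φ) : AEStronglyMeasurable (fun ω => φ (X ω)) P :=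
    hφ.comp_aestronglyMeasurable hX.aestronglyMeasurable
  have hlhs : Tendsto (fun n => ∫ ω, (dirDeriv v)^[m] (gχ n) (X ω) ∂P) atTop
      (𝓝 (∫ ω, (dirDeriv v)^[m] g (X ω) ∂P)) :=
    tendsto_integral_of_dominated_convergence (fun _ => Bₘ * ‖v‖ ^ m)
      (fun n => hmeas (contDiff_dirDeriv_iterate (hgχ n) v m).continuous) (integrable_const _)
      (fun n => ae_of_all _ fun ω =>
        (norm_dirDeriv_iterate_le (hgχ n) m _).trans (by gcongr; exact hBₘ n _))
      (ae_of_all _ fun ω => tendsto_nhds_of_eventually_eq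
        ((hloc (X ω)).mono fun n hn => (hn.dirDeriv_iterate m).eq_of_nhds))
  have hrhs : Tendsto (fun n => ∫ ω, gχ n (X ω) * Z ω ∂P) atTop
      (𝓝 (∫ ω, g (X ω) * Z ω ∂P)) :=
    tendsto_integral_of_dominated_convergence (fun ω => B₀ * ‖Z ω‖)
      (fun n => (hmeas (hgχ n).continuous).mul hZ.aestronglyMeasurable) (hZ.norm.const_mul _)
      (fun n => ae_of_all _ fun ω => by
        rw [norm_mul]; gcongr; exact norm_iteratedFDeriv_zero.symm.trans_le (hB₀ n _))
      (ae_of_all _ fun ω => tendsto_nhds_of_eventually_eq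
        ((hloc (X ω)).mono fun n hn => by rw [hn.eq_of_nhds]))
  exact tendsto_nhds_unique (hlhs.congr fun n => hIBP _ (hgχ n) (hχc n).mul_left) hrhs

theorem IntegratesByParts.integral_eq_smul_of_hasBoundedIteratedFDeriv
    {F : Type*} [NormedAddCommGroup F] [NormedSpace ℝ F] [CompleteSpace F]
    (hIBP : IntegratesByParts P X v m Z) (hX : AEMeasurable X P) (hZ : Integrable Z P)
    {g : E → F} (hg : ContDiff ℝ (⊤ : ℕ∞) g) (hgb : HasBoundedIteratedFDeriv g) :
    ∫ ω, (dirDeriv v)^[m] g (X ω) ∂P = ∫ ω, Z ω • g (X ω) ∂P := by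
  have hmeas {φ : E → F} (hφ : Continuous φ) : AEStronglyMeasurable (fun ω => φ (X ω)) P :=
    hφ.comp_aestronglyMeasurable hX.aestronglyMeasurable
  obtain ⟨C₀, hC₀⟩ := hgb 0
  obtain ⟨Cₘ, hCₘ⟩ := hgb m
  have hint_lhs : Integrable (fun ω => (dirDeriv v)^[m] g (X ω)) P :=
    .of_bound (hmeas (contDiff_dirDeriv_iterate hg v m).continuous) (Cₘ * ‖v‖ ^ m)
      (ae_of_all _ fun ω => (norm_dirDeriv_iterate_le hg m _).trans (by gcongr; exact hCₘ _))
  have hint_rhs : Integrable (fun ω => Z ω • g (X ω)) P :=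
    hZ.smul_bdd C₀ (hmeas hg.continuous) (ae_of_all _ fun ω => by simpa using hC₀ (X ω))
  refine (SeparatingDual.eq_iff_forall_dual_eq (R := ℝ)).2 fun L => ?_
  have hLg : HasBoundedIteratedFDeriv (L ∘ g) := fun k =>
    let ⟨C, hC⟩ := hgb k
    ⟨‖L‖ * C, fun x => (L.norm_iteratedFDeriv_comp_left hg.contDiffAt
      (by exact_mod_cast le_top)).trans (by gcongr; exact hC x)⟩
  have hreal := hIBP.integral_eq_of_hasBoundedIteratedFDeriv hX hZ (L.contDiff.comp hg) hLg
  rw [dirDeriv_iterate_clm_comp L hg] at hreal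
  rw [← L.integral_comp_comm hint_lhs, ← L.integral_comp_comm hint_rhs]
  simpa [mul_comm] using hreal

end IntegrationByParts

theorem IntegratesByParts.pow_abs_inner_mul_norm_integral_cexp_le {Ω E : Type*}
    [MeasurableSpace Ω] [NormedAddCommGroup E] [InnerProductSpace ℝ E] [FiniteDimensional ℝ E]
    [MeasurableSpace E] [BorelSpace E] {P : Measure Ω} [IsFiniteMeasure P] {X : Ω → E} {v : E}
    {m : ℕ} {Z : Ω → ℝ} (hIBP : IntegratesByParts P X v m Z) (hX : AEMeasurable X P)
    (hZ : Integrable Z P) (ξ : E) :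
    |⟪ξ, v⟫| ^ m * ‖∫ ω, cexp (I * ⟪ξ, X ω⟫) ∂P‖ ≤ ∫ ω, |Z ω| ∂P := by
  have key := hIBP.integral_eq_smul_of_hasBoundedIteratedFDeriv hX hZ
    (contDiff_cexp_I_mul_inner ξ) (hasBoundedIteratedFDeriv_cexp_I_mul_inner ξ)
  rw [dirDeriv_iterate_cexp_I_mul_inner, integral_const_mul] at key
  calc |⟪ξ, v⟫| ^ m * ‖∫ ω, cexp (I * ⟪ξ, X ω⟫) ∂P‖
      = ‖(I * ⟪ξ, v⟫) ^ m * ∫ ω, cexp (I * ⟪ξ, X ω⟫) ∂P‖ := by simp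
    _ ≤ ∫ ω, ‖Z ω • cexp (I * ⟪ξ, X ω⟫)‖ ∂P := key ▸ norm_integral_le_integral_norm _
    _ = ∫ ω, |Z ω| ∂P := by simp [norm_exp_I_mul_ofReal]

theorem EuclideanSpace.exists_norm_le_sqrt_card_mul_abs {ι : Type*} [Fintype ι] [Nonempty ι]
    (ξ : EuclideanSpace ℝ ι) : ∃ i, ‖ξ‖ ≤ √(Fintype.card ι) * |ξ i| := by
  obtain ⟨i, -, hi⟩ := Finset.exists_max_image Finset.univ (fun j => |ξ j|) Finset.univ_nonempty
  refine ⟨i, ?_⟩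
  rw [EuclideanSpace.norm_eq, ← Real.sqrt_sq (abs_nonneg (ξ i)), ← Real.sqrt_mul (by positivity)]
  gcongr
  calc ∑ j, ‖ξ j‖ ^ 2 ≤ ∑ _j : ι, |ξ i| ^ 2 := by
        gcongr with j
        exact hi j (Finset.mem_univ j)
    _ = _ := by simp

theorem exists_le_mul_one_add_norm_rpow_neg {ι : Type*} [Fintype ι] {m : ℕ}
    {a : EuclideanSpace ℝ ι → ℝ} (ha₀ : ∀ ξ, 0 ≤ a ξ) (ha₁ : ∀ ξ, a ξ ≤ 1)
    (h : ∀ i, ∃ C, ∀ ξ, |ξ i| ^ m * a ξ ≤ C) :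
    ∃ C, ∀ ξ, a ξ ≤ C * (1 + ‖ξ‖) ^ (-(m : ℝ)) := by
  rcases isEmpty_or_nonempty ι with hι | hι
  · exact ⟨1, fun ξ => by simpa [Subsingleton.elim ξ 0] using ha₁ ξ⟩
  choose C hC using h
  have hC₀ (i : ι) : 0 ≤ C i := (mul_nonneg (by positivity) (ha₀ 0)).trans (hC i 0)
  set S := √(Fintype.card ι) ^ m * ∑ i, C i
  refine ⟨2 ^ (m - 1) * (1 + S), fun ξ => ?_⟩
  rw [Real.rpow_neg (by positivity), Real.rpow_natCast, ← div_eq_mul_inv,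
    le_div_iff₀ (by positivity)]
  obtain ⟨i, hi⟩ := ξ.exists_norm_le_sqrt_card_mul_abs
  have hnorm : ‖ξ‖ ^ m * a ξ ≤ S :=
    calc ‖ξ‖ ^ m * a ξ ≤ (√(Fintype.card ι) * |ξ i|) ^ m * a ξ := by gcongr; exact ha₀ ξ
      _ = √(Fintype.card ι) ^ m * (|ξ i| ^ m * a ξ) := by ring
      _ ≤ S := mul_le_mul_of_nonneg_left ((hC i ξ).trans
          (Finset.single_le_sum (fun j _ => hC₀ j) (Finset.mem_univ i))) (by positivity)
  calc a ξ * (1 + ‖ξ‖) ^ m ≤ a ξ * (2 ^ (m - 1) * (1 ^ m + ‖ξ‖ ^ m)) := by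
        gcongr
        · exact ha₀ ξ
        · exact add_pow_le zero_le_one (norm_nonneg ξ) m
    _ = 2 ^ (m - 1) * (a ξ + ‖ξ‖ ^ m * a ξ) := by ring
    _ ≤ 2 ^ (m - 1) * (1 + S) := by gcongr; exact ha₁ ξ

/-- Iterated integration by parts implies rapid decay of the characteristic function. -/
theorem charFun_rapid_decay_of_iterated_integration_by_parts
    {Ω : Type*} [MeasurableSpace Ω] (P : Measure Ω) [IsProbabilityMeasure P]
    {d : ℕ} (X : Ω → EuclideanSpace ℝ (Fin d)) (hX : Measurable X)
    (hIBP : ∀ l : List (Fin d), l ≠ [] →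
      ∃ Z : Ω → ℝ, Integrable Z P ∧
        ∀ f : EuclideanSpace ℝ (Fin d) → ℝ, ContDiff ℝ (⊤ : ℕ∞) f → HasCompactSupport f →
          ∫ ω, pderivList l f (X ω) ∂P = ∫ ω, f (X ω) * Z ω ∂P) :
    ∀ m : ℕ, ∃ C : ℝ, ∀ ξ : EuclideanSpace ℝ (Fin d),
      ‖∫ ω, Complex.exp (Complex.I * ((inner ℝ ξ (X ω) : ℝ) : ℂ)) ∂P‖ ≤
        C * (1 + ‖ξ‖) ^ (-(m : ℝ)) := by
  intro m
  have hφ₁ (ξ : EuclideanSpace ℝ (Fin d)) : ‖∫ ω, cexp (I * ⟪ξ, X ω⟫) ∂P‖ ≤ 1 := by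
    simpa using norm_integral_le_of_norm_le_const (μ := P)
      (ae_of_all _ fun ω => (norm_exp_I_mul_ofReal ⟪ξ, X ω⟫).le)
  refine exists_le_mul_one_add_norm_rpow_neg (fun _ => norm_nonneg _) hφ₁ fun i => ?_
  rcases Nat.eq_zero_or_pos m with rfl | hm
  · exact ⟨1, by simpa using hφ₁⟩
  obtain ⟨Z, hZ, hZ_ibp⟩ := hIBP (List.replicate m i) (by simpa using hm.ne')
  have hIBP_i : IntegratesByParts P X (EuclideanSpace.single i 1) m Z := fun f hf hfc => by
    rw [← pderivList_replicate]
    exact hZ_ibp f hf hfc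
  refine ⟨∫ ω, |Z ω| ∂P, fun ξ => ?_⟩
  simpa [EuclideanSpace.inner_single_right] using
    hIBP_i.pow_abs_inner_mul_norm_integral_cexp_le hX.aemeasurable hZ ξ
end

section
/- Tauberian criterion for finiteness of all negative moments of an infinitely divisible nonnegative random variable: Let (E, ℰ, ν) be a measure space with ν(E) = +∞, let ψ : E → (0, ∞) be measurable with ∫_E (1 − e^{−ψ(u)}) ν(du) < ∞, and let t > 0. Let V be a nonnegative random variable whose Laplace transform satisfies E[e^{−λV}] = exp( t ∫_E (e^{−λψ(u)} − 1) ν(du) ) for all λ ≥ 0. Assume there exists α ∈ (0, 1) such that the limit r₁ = lim_{λ → +∞} λ^{−α} ∫_E (e^{−λψ(u)} − 1) ν(du) exists and belongs to (−∞, 0). Then P(V = 0) = 0 and E[V^{−p}] < ∞ for every p ≥ 1. -/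
/-!
For large `λ` the limit hypothesis gives `t ∫ (e^{-λψ} - 1) dν ≤ -c λ^α` with `c = -t r₁ / 2 > 0`,
so the Laplace transform `E[e^{-λV}]` is at most `C e^{-c λ^α}` for all `λ ≥ 0`.
Then `P(V = 0) ≤ E[e^{-λV}] → 0`, and by the Gamma-function identity
`v^{-p} = Γ(p)⁻¹ ∫₀^∞ λ^{p-1} e^{-λv} dλ` and Tonelli,
`E[V^{-p}] ≤ Γ(p)⁻¹ ∫₀^∞ λ^{p-1} C e^{-c λ^α} dλ < ∞` for every `p > 0`.
-/

open MeasureTheory Filter Real Set Topology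

lemma eventually_le_half_mul_rpow {f : ℝ → ℝ} {α r : ℝ} (hr : r < 0)
    (hf : Tendsto (fun x => x ^ (-α) * f x) atTop (𝓝 r)) :
    ∀ᶠ x in atTop, f x ≤ r / 2 * x ^ α := by
  filter_upwards [hf.eventually (eventually_le_nhds (by linarith : r < r / 2)),
    eventually_gt_atTop 0] with x hx hx0
  calc f x = x ^ (-α) * f x * x ^ α := by
        rw [mul_right_comm, ← rpow_add hx0, neg_add_cancel, rpow_zero, one_mul]
    _ ≤ r / 2 * x ^ α := by gcongr

lemma tendsto_ofReal_exp_neg_mul_rpow_atTop {c α : ℝ} (hc : 0 < c) (hα : 0 < α) :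
    Tendsto (fun x => ENNReal.ofReal (exp (-c * x ^ α))) atTop (𝓝 0) := by
  rw [← ENNReal.ofReal_zero]
  exact ENNReal.tendsto_ofReal <| tendsto_exp_atBot.comp <|
    (tendsto_rpow_atTop hα).const_mul_atTop_of_neg (neg_lt_zero.2 hc)

lemma ofReal_rpow_neg_le_lintegral {v p : ℝ} (hv : 0 ≤ v) (hp : 0 < p) :
    ENNReal.ofReal (v ^ (-p)) ≤
      ENNReal.ofReal (Gamma p)⁻¹ *
        ∫⁻ lam in Ioi 0, ENNReal.ofReal (lam ^ (p - 1) * exp (-lam * v)) := by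
  rcases hv.eq_or_lt with rfl | hv
  · -- `0 ^ (-p) = 0` by convention
    simp [zero_rpow (neg_ne_zero.2 hp.ne')]
  have hΓ := Gamma_pos_of_pos hp
  have hGamma := integral_rpow_mul_exp_neg_mul_Ioi hp hv
  -- integrability is read off from the nonzero value of the integral
  have hint : IntegrableOn (fun lam => lam ^ (p - 1) * exp (-(v * lam))) (Ioi 0) :=
    .of_integral_ne_zero (by rw [hGamma]; positivity)
  simp_rw [neg_mul, mul_comm _ v]
  rw [← ofReal_integral_eq_lintegral_ofReal hint
      (ae_restrict_of_forall_mem measurableSet_Ioi fun lam (hlam : 0 < lam) => by positivity),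
    ← ENNReal.ofReal_mul (inv_nonneg.2 hΓ.le), hGamma, one_div, inv_rpow hv.le,
    ← rpow_neg hv.le, mul_left_comm, inv_mul_cancel₀ hΓ.ne', mul_one]

lemma exp_neg_mul_le_one {lam v : ℝ} (hlam : 0 ≤ lam) (hv : 0 ≤ v) : exp (-lam * v) ≤ 1 :=
  exp_le_one_iff.2 (mul_nonpos_of_nonpos_of_nonneg (neg_nonpos.2 hlam) hv)

section LaplaceTransform

variable {Ω : Type*} [MeasurableSpace Ω] {P : Measure Ω} {V : Ω → ℝ}

lemma lintegral_exp_neg_mul_le_one [IsProbabilityMeasure P] (hV : ∀ ω, 0 ≤ V ω) {lam : ℝ}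
    (hlam : 0 ≤ lam) : ∫⁻ ω, ENNReal.ofReal (exp (-lam * V ω)) ∂P ≤ 1 :=
  calc ∫⁻ ω, ENNReal.ofReal (exp (-lam * V ω)) ∂P ≤ ∫⁻ _, 1 ∂P :=
        lintegral_mono fun ω => ENNReal.ofReal_le_one.2 (exp_neg_mul_le_one hlam (hV ω))
    _ = 1 := by simp

lemma lintegral_exp_neg_mul_eq_ofReal_integral [IsFiniteMeasure P] (hV : Measurable V)
    (hV₀ : ∀ ω, 0 ≤ V ω) {lam : ℝ} (hlam : 0 ≤ lam) :
    ∫⁻ ω, ENNReal.ofReal (exp (-lam * V ω)) ∂P = ENNReal.ofReal (∫ ω, exp (-lam * V ω) ∂P) := by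
  have hint : Integrable (fun ω => exp (-lam * V ω)) P :=
    .of_bound (by fun_prop) 1 <| ae_of_all _ fun ω => by
      rw [norm_of_nonneg (exp_pos _).le]
      exact exp_neg_mul_le_one hlam (hV₀ ω)
  exact (ofReal_integral_eq_lintegral_ofReal hint (ae_of_all _ fun _ => (exp_pos _).le)).symm

lemma exists_forall_lintegral_exp_neg_mul_le [IsProbabilityMeasure P] (hV : ∀ ω, 0 ≤ V ω)
    {c α : ℝ} (hc : 0 ≤ c) (hα : 0 ≤ α)
    (h : ∀ᶠ lam in atTop, ∫⁻ ω, ENNReal.ofReal (exp (-lam * V ω)) ∂P ≤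
      ENNReal.ofReal (exp (-c * lam ^ α))) :
    ∃ C, ∀ lam, 0 ≤ lam → ∫⁻ ω, ENNReal.ofReal (exp (-lam * V ω)) ∂P ≤
      ENNReal.ofReal (C * exp (-c * lam ^ α)) := by
  obtain ⟨Λ, hΛ⟩ := eventually_atTop.1 h
  refine ⟨exp (c * max Λ 0 ^ α), fun lam hlam => ?_⟩
  rcases le_total lam (max Λ 0) with hle | hle
  · refine (lintegral_exp_neg_mul_le_one hV hlam).trans ?_
    have hpow := rpow_le_rpow hlam hle hα
    rw [← exp_add, ENNReal.one_le_ofReal, one_le_exp_iff]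
    nlinarith
  · refine (hΛ lam (le_of_max_le_left hle)).trans (ENNReal.ofReal_le_ofReal ?_)
    exact le_mul_of_one_le_left (exp_pos _).le
      (one_le_exp (mul_nonneg hc (rpow_nonneg (le_max_right _ _) _)))

lemma measure_eq_zero_eq_zero_of_tendsto (hV : Measurable V)
    (h : Tendsto (fun lam => ∫⁻ ω, ENNReal.ofReal (exp (-lam * V ω)) ∂P) atTop (𝓝 0)) :
    P {ω | V ω = 0} = 0 := by
  refine nonpos_iff_eq_zero.1 (ge_of_tendsto' h fun lam => ?_)
  calc P {ω | V ω = 0} ≤ P {ω | 1 ≤ ENNReal.ofReal (exp (-lam * V ω))} :=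
        measure_mono fun ω (hω : V ω = 0) => by simp [hω]
    _ ≤ ∫⁻ ω, ENNReal.ofReal (exp (-lam * V ω)) ∂P := by
        simpa using mul_meas_ge_le_lintegral₀ (f := fun ω => ENNReal.ofReal (exp (-lam * V ω)))
          (by fun_prop) 1

lemma lintegral_rpow_neg_le [SFinite P] (hV : Measurable V) (hV₀ : ∀ ω, 0 ≤ V ω) {p : ℝ}
    (hp : 0 < p) :
    ∫⁻ ω, ENNReal.ofReal (V ω ^ (-p)) ∂P ≤
      ENNReal.ofReal (Gamma p)⁻¹ * ∫⁻ lam in Ioi 0,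
        ENNReal.ofReal (lam ^ (p - 1)) * ∫⁻ ω, ENNReal.ofReal (exp (-lam * V ω)) ∂P :=
  calc ∫⁻ ω, ENNReal.ofReal (V ω ^ (-p)) ∂P
      ≤ ∫⁻ ω, ENNReal.ofReal (Gamma p)⁻¹ *
          (∫⁻ lam in Ioi 0, ENNReal.ofReal (lam ^ (p - 1) * exp (-lam * V ω))) ∂P :=
        lintegral_mono fun ω => ofReal_rpow_neg_le_lintegral (hV₀ ω) hp
    _ = _ := by
        rw [lintegral_const_mul' _ _ ENNReal.ofReal_ne_top, lintegral_lintegral_swap (by fun_prop)]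
        congr 1
        refine setLIntegral_congr_fun measurableSet_Ioi fun lam (hlam : 0 < lam) => ?_
        simp_rw [ENNReal.ofReal_mul (rpow_nonneg hlam.le _)]
        exact lintegral_const_mul' _ _ ENNReal.ofReal_ne_top

lemma lintegral_rpow_neg_lt_top [SFinite P] (hV : Measurable V) (hV₀ : ∀ ω, 0 ≤ V ω)
    {p c α C : ℝ} (hp : 0 < p) (hc : 0 < c) (hα : 0 < α)
    (hL : ∀ lam, 0 ≤ lam → ∫⁻ ω, ENNReal.ofReal (exp (-lam * V ω)) ∂P ≤
      ENNReal.ofReal (C * exp (-c * lam ^ α))) :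
    ∫⁻ ω, ENNReal.ofReal (V ω ^ (-p)) ∂P < ⊤ := by
  refine (lintegral_rpow_neg_le hV hV₀ hp).trans_lt (ENNReal.mul_lt_top ENNReal.ofReal_lt_top ?_)
  have hint : IntegrableOn (fun lam => lam ^ (p - 1) * (C * exp (-c * lam ^ α))) (Ioi 0) := by
    refine IntegrableOn.congr_fun
      ((integrableOn_rpow_mul_exp_neg_mul_rpow (by linarith) hα hc).const_mul C)
      (fun _ _ => mul_left_comm _ _ _) measurableSet_Ioi
  calc ∫⁻ lam in Ioi 0,
        ENNReal.ofReal (lam ^ (p - 1)) * ∫⁻ ω, ENNReal.ofReal (exp (-lam * V ω)) ∂P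
      ≤ ∫⁻ lam in Ioi 0, ENNReal.ofReal (lam ^ (p - 1) * (C * exp (-c * lam ^ α))) :=
        setLIntegral_mono' measurableSet_Ioi fun lam (hlam : 0 < lam) => by
          rw [ENNReal.ofReal_mul (rpow_nonneg hlam.le _)]
          gcongr
          exact hL lam hlam.le
    _ < ⊤ := hint.lintegral_lt_top

end LaplaceTransform

theorem negative_moments_of_tauberian_criterion_general
    {E : Type*} [MeasurableSpace E] (ν : Measure E)
    (ψ : E → ℝ)
    (t : ℝ) (ht : 0 < t)
    {Ω : Type*} [MeasurableSpace Ω] (P : Measure Ω) [IsProbabilityMeasure P]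
    (V : Ω → ℝ) (hV : Measurable V) (hVnonneg : ∀ ω, 0 ≤ V ω)
    (hLaplace : ∀ lam : ℝ, 0 ≤ lam →
      ∫ ω, Real.exp (-lam * V ω) ∂P =
        Real.exp (t * ∫ u, (Real.exp (-lam * ψ u) - 1) ∂ν))
    (α r₁ : ℝ) (hα : α ∈ Set.Ioo (0 : ℝ) 1) (hr₁ : r₁ < 0)
    (hlim : Tendsto (fun lam : ℝ => lam ^ (-α) * ∫ u, (Real.exp (-lam * ψ u) - 1) ∂ν)
      atTop (nhds r₁)) :
    P {ω | V ω = 0} = 0 ∧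
      ∀ p : ℝ, 1 ≤ p → ∫⁻ ω, ENNReal.ofReal ((V ω) ^ (-p)) ∂P < ⊤ := by
  set c := t * -r₁ / 2
  have hc : 0 < c := div_pos (mul_pos ht (neg_pos.2 hr₁)) two_pos
  have hL : ∀ᶠ lam in atTop, ∫⁻ ω, ENNReal.ofReal (exp (-lam * V ω)) ∂P ≤
      ENNReal.ofReal (exp (-c * lam ^ α)) := by
    filter_upwards [eventually_le_half_mul_rpow hr₁ hlim, eventually_ge_atTop 0] with lam hI hlam
    rw [lintegral_exp_neg_mul_eq_ofReal_integral hV hVnonneg hlam, hLaplace lam hlam]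
    refine ENNReal.ofReal_le_ofReal (exp_le_exp.2 ?_)
    calc t * ∫ u, (exp (-lam * ψ u) - 1) ∂ν ≤ t * (r₁ / 2 * lam ^ α) := by gcongr
      _ = -c * lam ^ α := by ring
  obtain ⟨C, hC⟩ := exists_forall_lintegral_exp_neg_mul_le hVnonneg hc.le hα.1.le hL
  refine ⟨measure_eq_zero_eq_zero_of_tendsto hV ?_, fun p hp =>
    lintegral_rpow_neg_lt_top hV hVnonneg (by linarith) hc hα.1 hC⟩
  exact tendsto_of_tendsto_of_tendsto_of_le_of_le' tendsto_const_nhds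
    (tendsto_ofReal_exp_neg_mul_rpow_atTop hc hα.1) (.of_forall fun _ => zero_le) hL

/-- Tauberian criterion for finiteness of all negative moments of an infinitely
divisible nonnegative random variable whose Laplace transform is
`E[e^{−λV}] = exp(t ∫ (e^{−λψ} − 1) dν)`. -/
theorem negative_moments_of_tauberian_criterion
    {E : Type*} [MeasurableSpace E] (ν : Measure E) (hν : ν Set.univ = ⊤)
    (ψ : E → ℝ) (hψmeas : Measurable ψ) (hψpos : ∀ u, 0 < ψ u)
    (hψint : Integrable (fun u => 1 - Real.exp (-ψ u)) ν)
    (t : ℝ) (ht : 0 < t)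
    {Ω : Type*} [MeasurableSpace Ω] (P : Measure Ω) [IsProbabilityMeasure P]
    (V : Ω → ℝ) (hV : Measurable V) (hVnonneg : ∀ ω, 0 ≤ V ω)
    (hLaplace : ∀ lam : ℝ, 0 ≤ lam →
      ∫ ω, Real.exp (-lam * V ω) ∂P =
        Real.exp (t * ∫ u, (Real.exp (-lam * ψ u) - 1) ∂ν))
    (α r₁ : ℝ) (hα : α ∈ Set.Ioo (0 : ℝ) 1) (hr₁ : r₁ < 0)
    (hlim : Tendsto (fun lam : ℝ => lam ^ (-α) * ∫ u, (Real.exp (-lam * ψ u) - 1) ∂ν)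
      atTop (nhds r₁)) :
    P {ω | V ω = 0} = 0 ∧
      ∀ p : ℝ, 1 ≤ p → ∫⁻ ω, ENNReal.ofReal ((V ω) ^ (-p)) ∂P < ⊤ :=
  negative_moments_of_tauberian_criterion_general ν ψ t ht P V hV hVnonneg hLaplace α r₁ hα hr₁ hlim
end

section
/- Laplace transform decay implies finiteness of all negative moments: Let V be a nonnegative random variable on a probability space (Ω, 𝒜, P), and suppose there exist constants α > 0, c > 0 and λ₀ ≥ 0 such that E[e^{−λV}] ≤ exp(−c λ^α) for all λ ≥ λ₀. Then P(V = 0) = 0 and E[V^{−p}] < ∞ for every p ≥ 1. -/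
/-!
Chernoff's bound `P(V ≤ s) ≤ e^{λ s} E[e^{-λV}]` turns the decay of the Laplace transform into
`P(V ≤ s) ≤ K exp(λ s - c λ^α)` for all `λ ≥ 0`, where `K = exp(c λ₀^α)` absorbs the range
`λ < λ₀`, on which only `E[e^{-λV}] ≤ 1` is known. Taking `s = 0` and `λ → ∞` gives `P(V = 0) = 0`;
taking `λ = 1/s = t^{1/p}` gives `P(V^{-p} > t) ≤ K e exp(-c t^{α/p})`, which is integrable in `t`,
so the layer-cake formula shows that `E[V^{-p}]` is finite.
-/

open MeasureTheory Filter Set Real Topology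

lemma le_exp_mul_rpow_mul_exp_neg_mul_rpow {L : ℝ → ℝ} {α c lam₀ : ℝ} (hα : 0 ≤ α) (hc : 0 ≤ c)
    (hlam₀ : 0 ≤ lam₀) (hL_le_one : ∀ lam, 0 ≤ lam → L lam ≤ 1)
    (hL : ∀ lam, lam₀ ≤ lam → L lam ≤ exp (-c * lam ^ α)) {lam : ℝ} (hlam : 0 ≤ lam) :
    L lam ≤ exp (c * lam₀ ^ α) * exp (-c * lam ^ α) := by
  rcases le_total lam₀ lam with h | h
  · calc L lam ≤ exp (-c * lam ^ α) := hL lam h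
      _ ≤ exp (c * lam₀ ^ α) * exp (-c * lam ^ α) :=
        le_mul_of_one_le_left (exp_pos _).le (one_le_exp (by positivity))
  · calc L lam ≤ 1 := hL_le_one lam hlam
      _ ≤ exp (c * lam₀ ^ α) * exp (-c * lam ^ α) := by
        rw [← exp_add]
        have := rpow_le_rpow hlam h hα
        exact one_le_exp (by nlinarith)

section LaplaceDecay

variable {Ω : Type*} [MeasurableSpace Ω] {P : Measure Ω} {V : Ω → ℝ}

lemma integrable_exp_neg_mul [IsFiniteMeasure P] (hV : Measurable V) (hVnonneg : ∀ ω, 0 ≤ V ω)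
    {lam : ℝ} (hlam : 0 ≤ lam) : Integrable (fun ω => exp (-lam * V ω)) P := by
  refine (integrable_const (1 : ℝ)).mono' (hV.const_mul _).exp.aestronglyMeasurable
    (ae_of_all _ fun ω => ?_)
  rw [norm_of_nonneg (exp_pos _).le, exp_le_one_iff]
  nlinarith [hVnonneg ω]

lemma integral_exp_neg_mul_le_one [IsProbabilityMeasure P] (hV : Measurable V)
    (hVnonneg : ∀ ω, 0 ≤ V ω) {lam : ℝ} (hlam : 0 ≤ lam) :
    ∫ ω, exp (-lam * V ω) ∂P ≤ 1 := by
  calc ∫ ω, exp (-lam * V ω) ∂P ≤ ∫ _, (1 : ℝ) ∂P :=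
        integral_mono (integrable_exp_neg_mul hV hVnonneg hlam) (integrable_const _)
          fun ω => exp_le_one_iff.mpr (by nlinarith [hVnonneg ω])
    _ = 1 := by simp

variable [IsFiniteMeasure P] {α c K : ℝ}

lemma measure_le_le_of_laplace_le (hV : Measurable V) (hVnonneg : ∀ ω, 0 ≤ V ω)
    (hLaplace : ∀ lam, 0 ≤ lam → ∫ ω, exp (-lam * V ω) ∂P ≤ K * exp (-c * lam ^ α))
    {lam : ℝ} (hlam : 0 ≤ lam) (s : ℝ) :
    P {ω | V ω ≤ s} ≤ ENNReal.ofReal (K * exp (lam * s - c * lam ^ α)) := by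
  rw [← ofReal_measureReal]
  refine ENNReal.ofReal_le_ofReal ?_
  calc P.real {ω | V ω ≤ s} ≤ exp (lam * s) * ∫ ω, exp (-lam * V ω) ∂P := by
        simpa [ProbabilityTheory.mgf] using ProbabilityTheory.measure_le_le_exp_mul_mgf s (neg_nonpos.mpr hlam)
          (integrable_exp_neg_mul hV hVnonneg hlam)
    _ ≤ exp (lam * s) * (K * exp (-c * lam ^ α)) :=
        mul_le_mul_of_nonneg_left (hLaplace lam hlam) (exp_pos _).le
    _ = K * exp (lam * s - c * lam ^ α) := by
        rw [mul_left_comm, ← exp_add]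
        ring_nf

lemma measure_eq_zero_of_laplace_le (hV : Measurable V) (hVnonneg : ∀ ω, 0 ≤ V ω)
    (hα : 0 < α) (hc : 0 < c)
    (hLaplace : ∀ lam, 0 ≤ lam → ∫ ω, exp (-lam * V ω) ∂P ≤ K * exp (-c * lam ^ α)) :
    P {ω | V ω = 0} = 0 := by
  have hbound : ∀ᶠ lam in atTop, P {ω | V ω = 0} ≤ ENNReal.ofReal (K * exp (-c * lam ^ α)) := by
    filter_upwards [eventually_ge_atTop 0] with lam hlam
    calc P {ω | V ω = 0} ≤ P {ω | V ω ≤ 0} := measure_mono fun ω h => h.le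
      _ ≤ _ := measure_le_le_of_laplace_le hV hVnonneg hLaplace hlam 0
      _ = ENNReal.ofReal (K * exp (-c * lam ^ α)) := by simp [neg_mul]
  have hdecay : Tendsto (fun lam : ℝ => ENNReal.ofReal (K * exp (-c * lam ^ α))) atTop (𝓝 0) := by
    have hexp : Tendsto (fun lam : ℝ => exp (-c * lam ^ α)) atTop (𝓝 0) := by
      simpa only [neg_mul, Function.comp_def] using tendsto_exp_atBot.comp
        (tendsto_neg_atTop_atBot.comp ((tendsto_rpow_atTop hα).const_mul_atTop hc))
    simpa using ENNReal.tendsto_ofReal (hexp.const_mul K)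
  exact le_antisymm (ge_of_tendsto hdecay hbound) zero_le

lemma lintegral_rpow_neg_lt_top_of_laplace_le (hV : Measurable V) (hVnonneg : ∀ ω, 0 ≤ V ω)
    (hα : 0 < α) (hc : 0 < c)
    (hLaplace : ∀ lam, 0 ≤ lam → ∫ ω, exp (-lam * V ω) ∂P ≤ K * exp (-c * lam ^ α))
    {p : ℝ} (hp : 0 < p) :
    ∫⁻ ω, ENNReal.ofReal (V ω ^ (-p)) ∂P < ⊤ := by
  rw [lintegral_eq_lintegral_meas_lt P (ae_of_all _ fun ω => rpow_nonneg (hVnonneg ω) _)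
    (hV.pow_const _).aemeasurable]
  have htail : ∀ t ∈ Ioi (0 : ℝ), P {ω | t < V ω ^ (-p)} ≤
      ENNReal.ofReal (K * exp 1 * exp (-c * t ^ (α / p))) := by
    intro t ht
    have hsub : {ω | t < V ω ^ (-p)} ⊆ {ω | V ω ≤ t ^ (-p)⁻¹} := by
      intro ω hω
      rcases (hVnonneg ω).eq_or_lt with h | h
      · rw [mem_ofPred_eq, ← h, zero_rpow (neg_ne_zero.mpr hp.ne')] at hω
        exact absurd hω (lt_asymm ht)
      · exact ((lt_rpow_inv_iff_of_neg h ht (neg_lt_zero.mpr hp)).mpr hω).le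
    calc P {ω | t < V ω ^ (-p)} ≤ P {ω | V ω ≤ t ^ (-p)⁻¹} := measure_mono hsub
      _ ≤ ENNReal.ofReal (K * exp (t ^ p⁻¹ * t ^ (-p)⁻¹ - c * (t ^ p⁻¹) ^ α)) :=
        measure_le_le_of_laplace_le hV hVnonneg hLaplace (rpow_nonneg ht.le _) _
      _ = ENNReal.ofReal (K * exp 1 * exp (-c * t ^ (α / p))) := by
        rw [inv_neg, rpow_neg ht.le, mul_inv_cancel₀ (rpow_pos_of_pos ht _).ne', ← rpow_mul ht.le,
          inv_mul_eq_div, mul_assoc, ← exp_add, neg_mul, sub_eq_add_neg]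
  have hint : IntegrableOn (fun t : ℝ => exp (-c * t ^ (α / p))) (Ioi 0) := by
    simpa using integrableOn_rpow_mul_exp_neg_mul_rpow (s := 0) (by norm_num) (div_pos hα hp) hc
  calc ∫⁻ t in Ioi 0, P {ω | t < V ω ^ (-p)}
      ≤ ∫⁻ t in Ioi 0, ENNReal.ofReal (K * exp 1 * exp (-c * t ^ (α / p))) :=
        setLIntegral_mono' measurableSet_Ioi htail
    _ < ⊤ := (hint.const_mul _).lintegral_lt_top

end LaplaceDecay

/-- Laplace transform decay `E[e^{−λV}] ≤ exp(−c λ^α)` for large `λ` implies that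
`V > 0` a.s. and all negative moments of `V` are finite. -/
theorem negative_moments_of_laplace_decay
    {Ω : Type*} [MeasurableSpace Ω] (P : Measure Ω) [IsProbabilityMeasure P]
    (V : Ω → ℝ) (hV : Measurable V) (hVnonneg : ∀ ω, 0 ≤ V ω)
    (α c lam₀ : ℝ) (hα : 0 < α) (hc : 0 < c) (hlam₀ : 0 ≤ lam₀)
    (hLaplace : ∀ lam : ℝ, lam₀ ≤ lam →
      ∫ ω, Real.exp (-lam * V ω) ∂P ≤ Real.exp (-c * lam ^ α)) :
    P {ω | V ω = 0} = 0 ∧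
      ∀ p : ℝ, 1 ≤ p → ∫⁻ ω, ENNReal.ofReal ((V ω) ^ (-p)) ∂P < ⊤ := by
  have hLaplace' : ∀ lam, 0 ≤ lam →
      ∫ ω, exp (-lam * V ω) ∂P ≤ exp (c * lam₀ ^ α) * exp (-c * lam ^ α) :=
    fun lam hlam => le_exp_mul_rpow_mul_exp_neg_mul_rpow (L := fun lam => ∫ ω, exp (-lam * V ω) ∂P)
      hα.le hc.le hlam₀ (fun _ => integral_exp_neg_mul_le_one hV hVnonneg) hLaplace hlam
  exact ⟨measure_eq_zero_of_laplace_le hV hVnonneg hα hc hLaplace',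
    fun p hp => lintegral_rpow_neg_lt_top_of_laplace_le hV hVnonneg hα hc hLaplace'
      (one_pos.trans_le hp)⟩
end

section
/- Asymptotics of the truncated Laplace-type integral for the Lévy measure y^{−1−ε} dy: For every ε ∈ (0, 1), the limit lim_{λ → +∞} λ^{−ε/2} ∫₀^1 (e^{−λ y²} − 1) y^{−1−ε} dy exists, equals ∫₀^{∞} (e^{−t²} − 1) t^{−1−ε} dt, and this value is finite and strictly negative. -/
/-!
Substituting `t = √λ y` turns `λ^{-ε/2} ∫₀¹ (e^{-λy²} - 1) y^{-1-ε} dy` into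
`∫₀^{√λ} (e^{-t²} - 1) t^{-1-ε} dt`, which converges to the integral over `(0, ∞)` since
the integrand is integrable there: it is `O(t^{1-ε})` at `0` and `O(t^{-1-ε})` at `∞`.
The limit is negative because the integrand is.
-/

open MeasureTheory Filter Set Real

lemma exp_neg_sq_sub_one_neg {t : ℝ} (ht : t ≠ 0) : exp (-t ^ 2) - 1 < 0 := by
  have : exp (-t ^ 2) < 1 := exp_lt_one_iff.2 (neg_lt_zero.2 (by positivity))
  linarith

lemma abs_exp_neg_sq_sub_one_le_sq (t : ℝ) : |exp (-t ^ 2) - 1| ≤ t ^ 2 := by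
  rw [abs_sub_comm, abs_of_nonneg (sub_nonneg.2 (exp_le_one_iff.2 (by nlinarith)))]
  linarith [add_one_le_exp (-t ^ 2)]

lemma abs_exp_neg_sq_sub_one_le_one (t : ℝ) : |exp (-t ^ 2) - 1| ≤ 1 := by
  rw [abs_sub_comm, abs_of_nonneg (sub_nonneg.2 (exp_le_one_iff.2 (by nlinarith)))]
  linarith [exp_pos (-t ^ 2)]

lemma integrableOn_exp_neg_sq_sub_one_mul_rpow {s : ℝ} (hs₀ : -3 < s) (hs₁ : s < -1) :
    IntegrableOn (fun t : ℝ => (exp (-t ^ 2) - 1) * t ^ s) (Ioi 0) := by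
  have hcont : ContinuousOn (fun t : ℝ => (exp (-t ^ 2) - 1) * t ^ s) (Ioi 0) :=
    (by fun_prop : Continuous fun t : ℝ => exp (-t ^ 2) - 1).continuousOn.mul
      (continuousOn_id.rpow_const fun t ht => Or.inl (ne_of_gt ht))
  have hmeas : ∀ u ⊆ Ioi (0 : ℝ),
      AEStronglyMeasurable (fun t : ℝ => (exp (-t ^ 2) - 1) * t ^ s) (volume.restrict u) :=
    fun u hu => (hcont.aestronglyMeasurable measurableSet_Ioi).mono_measure
      (Measure.restrict_mono hu le_rfl)
  have near_zero : IntegrableOn (fun t : ℝ => (exp (-t ^ 2) - 1) * t ^ s) (Ioc 0 1) := by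
    have hdom : IntegrableOn (fun t : ℝ => t ^ (s + 2)) (Ioc 0 1) :=
      (intervalIntegral.intervalIntegrable_rpow' (by linarith)).1
    refine hdom.mono' (hmeas _ Ioc_subset_Ioi_self) (ae_restrict_of_forall_mem measurableSet_Ioc ?_)
    intro t ht
    rw [norm_mul, norm_eq_abs, norm_of_nonneg (rpow_nonneg ht.1.le s), rpow_add ht.1,
      rpow_two, mul_comm (t ^ s)]
    exact mul_le_mul_of_nonneg_right (abs_exp_neg_sq_sub_one_le_sq t) (rpow_nonneg ht.1.le s)
  have near_top : IntegrableOn (fun t : ℝ => (exp (-t ^ 2) - 1) * t ^ s) (Ioi 1) := by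
    refine (integrableOn_Ioi_rpow_of_lt hs₁ one_pos).mono' (hmeas _ (Ioi_subset_Ioi zero_le_one))
      (ae_restrict_of_forall_mem measurableSet_Ioi ?_)
    intro t ht
    have ht₀ : 0 ≤ t := zero_le_one.trans ht.le
    rw [norm_mul, norm_eq_abs, norm_of_nonneg (rpow_nonneg ht₀ s)]
    exact mul_le_of_le_one_left (rpow_nonneg ht₀ s) (abs_exp_neg_sq_sub_one_le_one t)
  rw [← Ioc_union_Ioi_eq_Ioi zero_le_one]
  exact near_zero.union near_top

lemma setIntegral_neg_of_forall_neg {X : Type*} [MeasurableSpace X] {μ : Measure X} {s : Set X}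
    {f : X → ℝ} (hs : MeasurableSet s) (hμs : μ s ≠ 0) (hf : IntegrableOn f s μ)
    (hneg : ∀ x ∈ s, f x < 0) : ∫ x in s, f x ∂μ < 0 := by
  have hpos : 0 < ∫ x in s, -f x ∂μ := by
    refine (setIntegral_pos_iff_support_of_nonneg_ae ?_ hf.neg).2 ?_
    · exact ae_restrict_of_forall_mem hs fun x hx => neg_nonneg.2 (hneg x hx).le
    · have hsupp : s ⊆ Function.support (-f) := fun x hx => neg_ne_zero.2 (hneg x hx).ne
      rw [inter_eq_right.2 hsupp]
      exact pos_iff_ne_zero.2 hμs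
  rwa [integral_neg, neg_pos] at hpos

lemma intervalIntegral_comp_mul_mul_rpow (φ : ℝ → ℝ) (s : ℝ) {b c : ℝ} (hb : 0 ≤ b)
    (hc : 0 < c) :
    ∫ t in 0..c * b, φ t * t ^ s = c ^ (s + 1) * ∫ y in 0..b, φ (c * y) * y ^ s := by
  have hscale : ∫ y in 0..b, φ (c * y) * y ^ s
      = c ^ (-s) * ∫ y in 0..b, φ (c * y) * (c * y) ^ s := by
    rw [← intervalIntegral.integral_const_mul]
    refine intervalIntegral.integral_congr fun y hy => ?_
    rw [uIcc_of_le hb] at hy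
    rw [mul_rpow hc.le hy.1, rpow_neg hc.le]
    field_simp
  rw [hscale, intervalIntegral.integral_comp_mul_left (fun t => φ t * t ^ s) hc.ne', mul_zero,
    smul_eq_mul, ← mul_assoc, ← mul_assoc, ← rpow_neg_one, ← rpow_add hc, ← rpow_add hc]
  simp

lemma rpow_mul_integral_exp_neg_mul_sq_sub_one_eq (ε : ℝ) {lam : ℝ} (hlam : 0 < lam) :
    lam ^ (-(ε / 2)) * ∫ y in Ioo (0 : ℝ) 1, (exp (-(lam * y ^ 2)) - 1) * y ^ (-1 - ε)
      = ∫ t in 0..√lam, (exp (-t ^ 2) - 1) * t ^ (-1 - ε) := by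
  rw [← mul_one √lam, intervalIntegral_comp_mul_mul_rpow _ _ zero_le_one (sqrt_pos.2 hlam),
    intervalIntegral.integral_of_le zero_le_one, integral_Ioc_eq_integral_Ioo]
  simp_rw [mul_pow, sq_sqrt hlam.le]
  rw [sqrt_eq_rpow, ← rpow_mul hlam.le]
  ring_nf

/-- Asymptotics of the truncated Laplace-type integral for the Lévy measure
`y^{−1−ε} dy`: for `ε ∈ (0,1)`,
`λ^{−ε/2} ∫₀¹ (e^{−λy²} − 1) y^{−1−ε} dy → ∫₀^∞ (e^{−t²} − 1) t^{−1−ε} dt`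
as `λ → ∞`, and this limit is finite (the integrand is integrable on `(0,∞)`)
and strictly negative. -/
theorem truncated_laplace_integral_asymptotics (ε : ℝ) (hε : ε ∈ Set.Ioo (0 : ℝ) 1) :
    IntegrableOn (fun t : ℝ => (Real.exp (-t ^ 2) - 1) * t ^ (-1 - ε)) (Set.Ioi 0) ∧
    (∫ t in Set.Ioi (0 : ℝ), (Real.exp (-t ^ 2) - 1) * t ^ (-1 - ε)) < 0 ∧
    Tendsto (fun lam : ℝ => lam ^ (-(ε / 2)) *
        ∫ y in Set.Ioo (0 : ℝ) 1, (Real.exp (-(lam * y ^ 2)) - 1) * y ^ (-1 - ε))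
      atTop
      (nhds (∫ t in Set.Ioi (0 : ℝ), (Real.exp (-t ^ 2) - 1) * t ^ (-1 - ε))) := by
  obtain ⟨hε₀, hε₁⟩ := hε
  have hint := integrableOn_exp_neg_sq_sub_one_mul_rpow (s := -1 - ε) (by linarith) (by linarith)
  refine ⟨hint, ?_, ?_⟩
  · refine setIntegral_neg_of_forall_neg measurableSet_Ioi (by simp) hint fun t ht => ?_
    exact mul_neg_of_neg_of_pos (exp_neg_sq_sub_one_neg (ne_of_gt ht)) (rpow_pos_of_pos ht _)
  · refine (intervalIntegral_tendsto_integral_Ioi 0 hint tendsto_sqrt_atTop).congr' ?_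
    filter_upwards [eventually_gt_atTop 0] with lam hlam
    exact (rpow_mul_integral_exp_neg_mul_sq_sub_one_eq ε hlam).symm
end
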